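/- Let q ∈ L¹(ℝ) be real-valued. For each λ in the closed upper half-plane with λ ≠ 0, let m_λ : ℝ → ℂ be the unique bounded solution of the Jost integral equation for q and λ, and set a(λ) := 1 − (2iλ)^{-1} ∫_ℝ q(t) m_λ(t) dt. Then log⁺|a(λ)| = o(|λ|^{-1}) as λ → 0 within the open upper half-plane; that is, for every ε > 0 there exists δ > 0 such that for all λ with Im λ > 0 and 0 < |λ| < δ one has |λ| · log⁺|a(λ)| ≤ ε. -/

import Mathlib

open MeasureTheory

/-!
Write `u = ‖m‖`, `Λ = ‖λ‖⁻¹` and `Q = ∫ |q|`. The Jost equation gives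
`u x ≤ 1 + ∫_{t > x} |D(t - x, λ)| |q t| u t`, and `|D(y, λ)| ≤ min(y, Λ)` in the closed upper
half-plane. Given `ε`, choose `R` such that `|q|` has mass at most `η = ε / 16` on each of
`(-∞, -R]` and `(R, ∞)`. For `x ≥ -R` the kernel is at most `min(t + R, Λ)`, whose `|q|`-mass is at
most `2 R Q + Λ η`; for `x < -R` it is at most `Λ`, which matters only on `t ≤ -R` (mass `≤ Λ η`)
because `u` is already bounded on `(-R, ∞)`. A backward Gronwall inequality, proved with the weight
`exp (4 ∫_{t > x} h)` so that no absolute continuity is needed, turns both into bounds of the form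
`exp (O(R Q) + O(Λ η))` up to factors polynomial in `Λ`. Hence
`|λ| log⁺ |a(λ)| ≤ ε / 2 + O(|λ| (1 + log (1 / |λ|)))`.
-/

/-- The kernel `D(y,λ) = (e^{2iλy} - 1)/(2iλ)` for `y > 0`, extended by `0`. -/
noncomputable def D (lam : ℂ) (y : ℝ) : ℂ :=
  if 0 < y then (Complex.exp (2 * Complex.I * lam * y) - 1) / (2 * Complex.I * lam) else 0

open Set Filter Topology

lemma Complex.norm_exp_sub_one_le_norm_of_re_nonpos {z : ℂ} (hz : z.re ≤ 0) :
    ‖exp z - 1‖ ≤ ‖z‖ := by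
  have hexp : ∀ w ∈ {w : ℂ | w.re ≤ 0}, HasDerivWithinAt exp (exp w) {w | w.re ≤ 0} w :=
    fun w _ => (hasDerivAt_exp w).hasDerivWithinAt
  have hbound : ∀ w ∈ {w : ℂ | w.re ≤ 0}, ‖exp w‖ ≤ 1 := fun w hw => by
    rw [norm_exp]; exact Real.exp_le_one_iff.mpr hw
  simpa using (convex_halfSpace_re_le 0).norm_image_sub_le_of_norm_hasDerivWithin_le hexp hbound
    (show (0 : ℂ) ∈ {w : ℂ | w.re ≤ 0} by simp) hz

lemma norm_D_le {lam : ℂ} (him : 0 ≤ lam.im) (y : ℝ) : ‖D lam y‖ ≤ min (max y 0) ‖lam‖⁻¹ := by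
  unfold D
  split_ifs with hy
  · have hre : (2 * Complex.I * lam * y).re ≤ 0 := by
      have : (2 * Complex.I * lam * y).re = -(2 * lam.im * y) := by
        simp [Complex.mul_re, Complex.mul_im]
      rw [this, neg_nonpos]
      positivity
    have hden : ‖2 * Complex.I * lam‖ = 2 * ‖lam‖ := by simp
    rw [norm_div, hden, max_eq_left hy.le]
    refine le_min (div_le_of_le_mul₀ (by positivity) hy.le ?_) ?_
    · calc _ ≤ ‖2 * Complex.I * lam * y‖ := Complex.norm_exp_sub_one_le_norm_of_re_nonpos hre
        _ = y * (2 * ‖lam‖) := by simp [abs_of_pos hy]; ring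
    · have h2 : ‖Complex.exp (2 * Complex.I * lam * y) - 1‖ ≤ 2 := by
        calc _ ≤ ‖Complex.exp (2 * Complex.I * lam * y)‖ + ‖(1 : ℂ)‖ := norm_sub_le _ _
          _ ≤ 1 + 1 := by
            gcongr
            · rw [Complex.norm_exp]; exact Real.exp_le_one_iff.mpr hre
            · simp
          _ = 2 := by norm_num
      calc _ ≤ 2 / (2 * ‖lam‖) := by gcongr
        _ = ‖lam‖⁻¹ := by rw [div_mul_eq_div_div, div_self two_ne_zero, one_div]
  · simp

noncomputable def tailIntegral (h : ℝ → ℝ) (x : ℝ) : ℝ := ∫ t in Ioi x, h t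

lemma tendsto_setIntegral_Ioi_atTop {f : ℝ → ℝ} (hf : Integrable f) :
    Tendsto (fun x => ∫ t in Ioi x, f t) atTop (𝓝 0) := by
  have := tendsto_setIntegral_of_antitone (μ := volume) (f := f) (s := fun x : ℝ => Ioi x)
    (fun _ => measurableSet_Ioi) (fun _ _ hab => Ioi_subset_Ioi hab) ⟨0, hf.integrableOn⟩
  have hempty : ⋂ x : ℝ, Ioi x = ∅ := iInter_eq_empty_iff.2 fun x => ⟨x, lt_irrefl x⟩
  rwa [hempty, Measure.restrict_empty, integral_zero_measure] at this

lemma tendsto_setIntegral_Iic_neg_atTop {f : ℝ → ℝ} (hf : Integrable f) :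
    Tendsto (fun x => ∫ t in Iic (-x), f t) atTop (𝓝 0) := by
  have := tendsto_setIntegral_of_antitone (μ := volume) (f := f) (s := fun x : ℝ => Iic (-x))
    (fun _ => measurableSet_Iic) (fun _ _ hab => Iic_subset_Iic.2 (neg_le_neg hab))
    ⟨0, hf.integrableOn⟩
  have hempty : ⋂ x : ℝ, Iic (-x) = ∅ := iInter_eq_empty_iff.2 fun x => ⟨-x + 1, by simp⟩
  rwa [hempty, Measure.restrict_empty, integral_zero_measure] at this

lemma exists_setIntegral_Iic_Ioi_le {f : ℝ → ℝ} (hf : Integrable f) {η : ℝ} (hη : 0 < η) :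
    ∃ R > 0, (∫ t in Iic (-R), f t) ≤ η ∧ (∫ t in Ioi R, f t) ≤ η :=
  ((eventually_gt_atTop 0).and (((tendsto_setIntegral_Iic_neg_atTop hf).eventually_le_const hη).and
    ((tendsto_setIntegral_Ioi_atTop hf).eventually_le_const hη))).exists

namespace tailIntegral

variable {h : ℝ → ℝ}

lemma nonneg (hp : ∀ t, 0 ≤ h t) (x : ℝ) : 0 ≤ tailIntegral h x :=
  setIntegral_nonneg measurableSet_Ioi fun t _ => hp t

lemma le_integral (hh : Integrable h) (hp : ∀ t, 0 ≤ h t) (x : ℝ) :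
    tailIntegral h x ≤ ∫ t, h t :=
  setIntegral_le_integral hh (Eventually.of_forall hp)

lemma antitone (hh : Integrable h) (hp : ∀ t, 0 ≤ h t) : Antitone (tailIntegral h) :=
  fun _ _ hab => setIntegral_mono_set hh.integrableOn (Eventually.of_forall hp)
    (Ioi_subset_Ioi hab).eventuallyLE

lemma eq_integral_Ioc_add (hh : Integrable h) {a b : ℝ} (hab : a ≤ b) :
    tailIntegral h a = (∫ t in Ioc a b, h t) + tailIntegral h b := by
  rw [tailIntegral, tailIntegral, ← setIntegral_union Ioc_disjoint_Ioi_same measurableSet_Ioi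
    hh.integrableOn hh.integrableOn, Ioc_union_Ioi_eq_Ioi hab]

lemma continuous (hh : Integrable h) : Continuous (tailIntegral h) := by
  have heq : tailIntegral h = fun x => tailIntegral h 0 - ∫ t in (0 : ℝ)..x, h t := by
    ext x
    rcases le_total 0 x with hx | hx
    · rw [eq_integral_Ioc_add hh hx, intervalIntegral.integral_of_le hx]; ring
    · rw [eq_integral_Ioc_add hh hx, intervalIntegral.integral_of_ge hx]; ring
  rw [heq]
  exact continuous_const.sub
    (intervalIntegral.continuous_primitive (fun _ _ => hh.intervalIntegrable) 0)

lemma integrable_mul_exp (hh : Integrable h) (hp : ∀ t, 0 ≤ h t) :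
    Integrable fun t => h t * Real.exp (4 * tailIntegral h t) := by
  refine hh.mul_bdd (c := Real.exp (4 * ∫ t, h t))
    (Real.continuous_exp.comp (continuous_const.mul (continuous hh))).aestronglyMeasurable
    (Eventually.of_forall fun t => ?_)
  rw [Real.norm_of_nonneg (Real.exp_pos _).le, Real.exp_le_exp]
  linarith [le_integral hh hp t]

lemma setIntegral_mul_exp_le (hh : Integrable h) (hp : ∀ t, 0 ≤ h t) {s : Set ℝ}
    (hs : MeasurableSet s) {x : ℝ} (hsx : s ⊆ Ici x) :
    ∫ t in s, h t * Real.exp (4 * tailIntegral h t)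
      ≤ (∫ t in s, h t) * Real.exp (4 * tailIntegral h x) := by
  rw [← integral_mul_const]
  refine setIntegral_mono_on (integrable_mul_exp hh hp).integrableOn
    (hh.mul_const _).integrableOn hs fun t ht => ?_
  gcongr
  · exact hp t
  · exact antitone hh hp (hsx ht)

/-- Halving the weight `exp (4 * tailIntegral h)` costs a drop of `log 2 / 4 ≤ 1 / 4` in the tail
mass; splitting `(x, ∞)` at the point where this happens gives the induction. -/
lemma integral_Ioi_mul_exp_le_of_le_nat_mul_log_two (hh : Integrable h) (hp : ∀ t, 0 ≤ h t)
    (n : ℕ) : ∀ x, 4 * tailIntegral h x ≤ n * Real.log 2 →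
      ∫ t in Ioi x, h t * Real.exp (4 * tailIntegral h t)
        ≤ (Real.exp (4 * tailIntegral h x) - 1) / 2 := by
  have hlog2 : 0 < Real.log 2 ∧ Real.log 2 < 1 := by
    constructor
    · exact Real.log_pos one_lt_two
    · linarith [Real.log_two_lt_d9]
  have small : ∀ x, 4 * tailIntegral h x ≤ Real.log 2 →
      ∫ t in Ioi x, h t * Real.exp (4 * tailIntegral h t)
        ≤ (Real.exp (4 * tailIntegral h x) - 1) / 2 := by
    intro x hx
    have hE : Real.exp (4 * tailIntegral h x) ≤ 2 := by
      simpa [Real.exp_log] using Real.exp_le_exp.2 hx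
    have hint : ∫ t in Ioi x, h t * Real.exp (4 * tailIntegral h t)
        ≤ tailIntegral h x * Real.exp (4 * tailIntegral h x) :=
      setIntegral_mul_exp_le hh hp measurableSet_Ioi Ioi_subset_Ici_self
    nlinarith [Real.add_one_le_exp (4 * tailIntegral h x),
      mul_nonneg (nonneg hp x) (sub_nonneg.2 hE)]
  induction n with
  | zero => exact fun x hx => small x (hx.trans (by simpa using hlog2.1.le))
  | succ n ih =>
    intro x hx
    by_cases hsmall : 4 * tailIntegral h x ≤ Real.log 2
    · exact small x hsmall
    have hlarge := not_le.1 hsmall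
    obtain ⟨b₀, hb₀x, hb₀⟩ := ((eventually_ge_atTop x).and
      ((tendsto_setIntegral_Ioi_atTop hh).eventually_le_const
        (by linarith : 0 < tailIntegral h x - Real.log 2 / 4))).exists
    obtain ⟨b, hb, hbv⟩ := intermediate_value_Icc' hb₀x (continuous hh).continuousOn
      ⟨hb₀, by linarith⟩
    have hEb : Real.exp (4 * tailIntegral h b) = Real.exp (4 * tailIntegral h x) / 2 := by
      rw [hbv, mul_sub, mul_div_cancel₀ _ four_ne_zero, Real.exp_sub, Real.exp_log two_pos]
    have hfirst : ∫ t in Ioc x b, h t * Real.exp (4 * tailIntegral h t)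
        ≤ Real.log 2 / 4 * Real.exp (4 * tailIntegral h x) := by
      have hmass : ∫ t in Ioc x b, h t = Real.log 2 / 4 := by
        linarith [eq_integral_Ioc_add hh hb.1]
      rw [← hmass]
      exact setIntegral_mul_exp_le hh hp measurableSet_Ioc
        (Ioc_subset_Icc_self.trans Icc_subset_Ici_self)
    have hrest := ih b (by push_cast at hx; linarith)
    rw [← Ioc_union_Ioi_eq_Ioi hb.1, setIntegral_union Ioc_disjoint_Ioi_same measurableSet_Ioi
      (integrable_mul_exp hh hp).integrableOn (integrable_mul_exp hh hp).integrableOn]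
    rw [hEb] at hrest
    nlinarith [Real.exp_pos (4 * tailIntegral h x)]

lemma integral_Ioi_mul_exp_le (hh : Integrable h) (hp : ∀ t, 0 ≤ h t) (x : ℝ) :
    ∫ t in Ioi x, h t * Real.exp (4 * tailIntegral h t)
      ≤ (Real.exp (4 * tailIntegral h x) - 1) / 2 := by
  obtain ⟨n, hn⟩ := exists_nat_ge (4 * tailIntegral h x / Real.log 2)
  exact integral_Ioi_mul_exp_le_of_le_nat_mul_log_two hh hp n x
    ((div_le_iff₀ (Real.log_pos one_lt_two)).1 hn)

end tailIntegral

lemma le_two_mul_exp_tailIntegral {h u : ℝ → ℝ} (hh : Integrable h) (hp : ∀ t, 0 ≤ h t)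
    (hu : Measurable u) (hu0 : ∀ t, 0 ≤ u t) {C : ℝ} (huC : ∀ t, u t ≤ C) {β : ℝ} (hβ : 0 ≤ β)
    {x₀ : ℝ} (hrec : ∀ x, x₀ ≤ x → u x ≤ β + ∫ t in Ioi x, h t * u t) {x : ℝ} (hx : x₀ ≤ x) :
    u x ≤ 2 * β * Real.exp (4 * tailIntegral h x) := by
  have hC : 0 ≤ C := (hu0 x).trans (huC x)
  have hhu : Integrable fun t => h t * u t :=
    hh.mul_bdd hu.aestronglyMeasurable (Eventually.of_forall fun t => by
      rw [Real.norm_of_nonneg (hu0 t)]; exact huC t)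
  -- the bounds `A n` satisfy `A (n + 1) = β + A n / 2`, so they decrease to `2 * β`
  set A : ℕ → ℝ := fun n => 2 * β + C * (1 / 2) ^ n
  have hA : ∀ n, ∀ y, x₀ ≤ y → u y ≤ A n * Real.exp (4 * tailIntegral h y) := by
    intro n
    induction n with
    | zero =>
      intro y _
      have := Real.one_le_exp (mul_nonneg zero_le_four (tailIntegral.nonneg hp y))
      simp only [A, pow_zero, mul_one]
      nlinarith [huC y]
    | succ n ih =>
      intro y hy
      have hAn : 0 ≤ A n := by positivity
      have hint : ∫ t in Ioi y, h t * u t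
          ≤ A n * ∫ t in Ioi y, h t * Real.exp (4 * tailIntegral h t) := by
        rw [← integral_const_mul]
        refine setIntegral_mono_on hhu.integrableOn
          ((tailIntegral.integrable_mul_exp hh hp).const_mul _).integrableOn measurableSet_Ioi
          fun t ht => ?_
        calc h t * u t ≤ h t * (A n * Real.exp (4 * tailIntegral h t)) :=
              mul_le_mul_of_nonneg_left (ih t (hy.trans ht.le)) (hp t)
          _ = _ := by ring
      have hweight := mul_le_mul_of_nonneg_left
        (tailIntegral.integral_Ioi_mul_exp_le hh hp y) hAn
      have hE := Real.one_le_exp (mul_nonneg zero_le_four (tailIntegral.nonneg hp y))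
      have hsucc : A (n + 1) = β + A n / 2 := by simp only [A]; ring
      rw [hsucc]
      nlinarith [hrec y hy]
  have hlim : Tendsto (fun n => A n * Real.exp (4 * tailIntegral h x)) atTop
      (𝓝 (2 * β * Real.exp (4 * tailIntegral h x))) := by
    have := ((tendsto_pow_atTop_nhds_zero_of_lt_one (by norm_num : (0 : ℝ) ≤ 1 / 2)
      (by norm_num)).const_mul C).const_add (2 * β)
    rw [mul_zero, add_zero] at this
    exact this.mul_const _
  exact ge_of_tendsto' hlim fun n => hA n x hx

lemma integral_min_max_add_mul_abs_le {q : ℝ → ℝ} (hq : Integrable q) {R Λ : ℝ} (hR : 0 ≤ R)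
    (hΛ : 0 ≤ Λ) :
    ∫ t, min (max (t + R) 0) Λ * |q t| ≤ 2 * R * (∫ t, |q t|) + Λ * ∫ t in Ioi R, |q t| := by
  have hind : Integrable fun t => Λ * (Ioi R).indicator (fun t => |q t|) t :=
    ((integrable_indicator_iff measurableSet_Ioi).2 hq.abs.integrableOn).const_mul _
  have hint : Integrable fun t => min (max (t + R) 0) Λ * |q t| :=
    hq.abs.bdd_mul (c := Λ) (by fun_prop) (Eventually.of_forall fun t => by
      rw [Real.norm_of_nonneg (le_min (le_max_right _ _) hΛ)]; exact min_le_right _ _)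
  calc ∫ t, min (max (t + R) 0) Λ * |q t|
      ≤ ∫ t, (2 * R * |q t| + Λ * (Ioi R).indicator (fun t => |q t|) t) := by
        refine integral_mono hint ((hq.abs.const_mul _).add hind) fun t => ?_
        by_cases ht : t ∈ Ioi R
        · rw [indicator_of_mem ht]
          nlinarith [min_le_right (max (t + R) 0) Λ, abs_nonneg (q t)]
        · rw [indicator_of_notMem ht, mul_zero, add_zero]
          have hle : min (max (t + R) 0) Λ ≤ 2 * R :=
            (min_le_left _ _).trans
              (max_le (by linarith [not_lt.1 (show ¬ R < t from ht)]) (by linarith))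
          exact mul_le_mul_of_nonneg_right hle (abs_nonneg _)
    _ = 2 * R * (∫ t, |q t|) + Λ * ∫ t in Ioi R, |q t| := by
        rw [integral_add (hq.abs.const_mul _) hind, integral_const_mul, integral_const_mul,
          integral_indicator measurableSet_Ioi]

section Jost

variable {q : ℝ → ℝ} {lam : ℂ} {m : ℝ → ℂ}

lemma norm_le_one_add_integral_of_jost
    (hjost : ∀ x, m x = 1 + ∫ t in Ioi x, D lam (t - x) * q t * m t) {k : ℝ → ℝ} {x : ℝ}
    (hk : ∀ t > x, ‖D lam (t - x)‖ * |q t| ≤ k t)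
    (hki : IntegrableOn (fun t => k t * ‖m t‖) (Ioi x)) :
    ‖m x‖ ≤ 1 + ∫ t in Ioi x, k t * ‖m t‖ := by
  calc ‖m x‖ = ‖1 + ∫ t in Ioi x, D lam (t - x) * q t * m t‖ := by rw [← hjost x]
    _ ≤ 1 + ‖∫ t in Ioi x, D lam (t - x) * q t * m t‖ := by
      simpa using norm_add_le (1 : ℂ) _
    _ ≤ 1 + ∫ t in Ioi x, ‖D lam (t - x) * q t * m t‖ := by
      gcongr; exact norm_integral_le_integral_norm _
    _ ≤ 1 + ∫ t in Ioi x, k t * ‖m t‖ := by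
      refine add_le_add le_rfl (integral_mono_of_nonneg
        (ae_of_all _ fun t => norm_nonneg (D lam (t - x) * q t * m t)) hki
        (ae_restrict_of_forall_mem measurableSet_Ioi fun t ht => ?_))
      simp only [norm_mul, Complex.norm_real, Real.norm_eq_abs]
      exact mul_le_mul_of_nonneg_right (hk t ht) (norm_nonneg _)

lemma norm_one_sub_inv_mul_integral_le (hq : Integrable q) {M : ℝ} (hM : ∀ t, ‖m t‖ ≤ M) :
    ‖1 - (2 * Complex.I * lam)⁻¹ * ∫ t, (q t : ℂ) * m t‖
      ≤ 1 + ‖lam‖⁻¹ / 2 * ((∫ t, |q t|) * M) := by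
  have hint : ‖∫ t, (q t : ℂ) * m t‖ ≤ (∫ t, |q t|) * M := by
    rw [← integral_mul_const]
    refine norm_integral_le_of_norm_le (hq.abs.mul_const M) (Eventually.of_forall fun t => ?_)
    rw [norm_mul, Complex.norm_real, Real.norm_eq_abs]
    exact mul_le_mul_of_nonneg_left (hM t) (abs_nonneg _)
  have hinv : ‖(2 * Complex.I * lam)⁻¹‖ = ‖lam‖⁻¹ / 2 := by simp; ring
  calc _ ≤ ‖(1 : ℂ)‖ + ‖(2 * Complex.I * lam)⁻¹ * ∫ t, (q t : ℂ) * m t‖ := norm_sub_le _ _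
    _ ≤ 1 + ‖lam‖⁻¹ / 2 * ((∫ t, |q t|) * M) := by
      rw [norm_one, norm_mul, hinv]
      gcongr

lemma norm_le_of_neg_le_of_jost (hq : Integrable q) (him : 0 ≤ lam.im) (hm : Measurable m)
    {C : ℝ} (hmC : ∀ x, ‖m x‖ ≤ C)
    (hjost : ∀ x, m x = 1 + ∫ t in Ioi x, D lam (t - x) * q t * m t)
    {R η : ℝ} (hR : 0 ≤ R) (hη : ∫ t in Ioi R, |q t| ≤ η) {x : ℝ} (hx : -R ≤ x) :
    ‖m x‖ ≤ 2 * Real.exp (4 * (2 * R * (∫ t, |q t|) + ‖lam‖⁻¹ * η)) := by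
  set Λ := ‖lam‖⁻¹
  have hΛ : 0 ≤ Λ := inv_nonneg.2 (norm_nonneg _)
  set h : ℝ → ℝ := fun t => min (max (t + R) 0) Λ * |q t|
  have hh0 : ∀ t, 0 ≤ h t := fun t => mul_nonneg (le_min (le_max_right _ _) hΛ) (abs_nonneg _)
  have hhint : Integrable h :=
    hq.abs.bdd_mul (by fun_prop) (Eventually.of_forall fun t => by
      rw [Real.norm_of_nonneg (le_min (le_max_right _ _) hΛ)]; exact min_le_right _ _)
  have hrec : ∀ y, -R ≤ y → ‖m y‖ ≤ 1 + ∫ t in Ioi y, h t * ‖m t‖ := by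
    refine fun y hy => norm_le_one_add_integral_of_jost hjost (fun t ht => ?_)
      (hhint.mul_bdd hm.norm.aestronglyMeasurable
        (Eventually.of_forall fun t => (norm_norm (m t)).trans_le (hmC t))).integrableOn
    refine mul_le_mul_of_nonneg_right ((norm_D_le him _).trans ?_) (abs_nonneg _)
    gcongr
    linarith
  calc ‖m x‖ ≤ 2 * 1 * Real.exp (4 * tailIntegral h x) :=
        le_two_mul_exp_tailIntegral hhint hh0 hm.norm (fun t => norm_nonneg _) hmC zero_le_one
          hrec hx
    _ ≤ 2 * Real.exp (4 * (2 * R * (∫ t, |q t|) + Λ * η)) := by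
      rw [mul_one]
      gcongr
      calc tailIntegral h x ≤ ∫ t, h t := tailIntegral.le_integral hhint hh0 x
        _ ≤ 2 * R * (∫ t, |q t|) + Λ * ∫ t in Ioi R, |q t| :=
          integral_min_max_add_mul_abs_le hq hR hΛ
        _ ≤ 2 * R * (∫ t, |q t|) + Λ * η := by gcongr

lemma norm_le_add_integral_indicator_of_jost (hq : Integrable q) (him : 0 ≤ lam.im)
    (hm : Measurable m) {C : ℝ} (hmC : ∀ x, ‖m x‖ ≤ C)
    (hjost : ∀ x, m x = 1 + ∫ t in Ioi x, D lam (t - x) * q t * m t)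
    {R B : ℝ} (hB : ∀ t, -R < t → ‖m t‖ ≤ B) (y : ℝ) :
    ‖m y‖ ≤ (1 + ‖lam‖⁻¹ * (∫ t, |q t|) * B) +
      ∫ t in Ioi y, (Iic (-R)).indicator (fun t => ‖lam‖⁻¹ * |q t|) t * ‖m t‖ := by
  set Λ := ‖lam‖⁻¹
  set h : ℝ → ℝ := (Iic (-R)).indicator fun t => Λ * |q t|
  have hΛB : 0 ≤ Λ * B :=
    mul_nonneg (inv_nonneg.2 (norm_nonneg _)) ((norm_nonneg _).trans (hB (-R + 1) (by linarith)))
  have hmbdd : ∀ᵐ t, ‖‖m t‖‖ ≤ C :=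
    Eventually.of_forall fun t => (norm_norm (m t)).trans_le (hmC t)
  have hqm : Integrable fun t => Λ * |q t| * ‖m t‖ :=
    (hq.abs.const_mul Λ).mul_bdd hm.norm.aestronglyMeasurable hmbdd
  have hhm : Integrable fun t => h t * ‖m t‖ :=
    ((integrable_indicator_iff measurableSet_Iic).2 (hq.abs.const_mul Λ).integrableOn).mul_bdd
      hm.norm.aestronglyMeasurable hmbdd
  have hjost_y := norm_le_one_add_integral_of_jost hjost (k := fun t => Λ * |q t|) (x := y)
    (fun t _ => mul_le_mul_of_nonneg_right ((norm_D_le him _).trans (min_le_right _ _))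
      (abs_nonneg _)) hqm.integrableOn
  have hsplit : ∫ t in Ioi y, Λ * |q t| * ‖m t‖
      ≤ ∫ t in Ioi y, (h t * ‖m t‖ + Λ * B * |q t|) := by
    refine setIntegral_mono_on hqm.integrableOn (hhm.add (hq.abs.const_mul _)).integrableOn
      measurableSet_Ioi fun t _ => ?_
    by_cases ht : t ∈ Iic (-R)
    · rw [show h t = Λ * |q t| from indicator_of_mem ht _]
      linarith [mul_nonneg hΛB (abs_nonneg (q t))]
    · rw [show h t = 0 from indicator_of_notMem ht _, zero_mul, zero_add]
      nlinarith [hB t (not_le.1 (show ¬ t ≤ -R from ht)),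
        mul_nonneg (inv_nonneg.2 (norm_nonneg lam)) (abs_nonneg (q t))]
  rw [integral_add hhm.integrableOn (hq.abs.const_mul _).integrableOn, integral_const_mul]
    at hsplit
  have hQ := mul_le_mul_of_nonneg_left (setIntegral_le_integral (s := Ioi y)
    (f := fun t => |q t|) hq.abs (ae_of_all _ fun t => abs_nonneg (q t))) hΛB
  linarith

lemma norm_le_of_tails_of_jost (hq : Integrable q) (him : 0 ≤ lam.im) (hm : Measurable m)
    {C : ℝ} (hmC : ∀ x, ‖m x‖ ≤ C)
    (hjost : ∀ x, m x = 1 + ∫ t in Ioi x, D lam (t - x) * q t * m t)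
    {R η : ℝ} (hR : 0 ≤ R) (hlo : ∫ t in Iic (-R), |q t| ≤ η) (hhi : ∫ t in Ioi R, |q t| ≤ η)
    (x : ℝ) :
    ‖m x‖ ≤ 2 * (1 + ‖lam‖⁻¹ * (∫ t, |q t|) *
      (2 * Real.exp (4 * (2 * R * (∫ t, |q t|) + ‖lam‖⁻¹ * η)))) *
        Real.exp (4 * (‖lam‖⁻¹ * η)) := by
  set Λ := ‖lam‖⁻¹
  have hΛ : 0 ≤ Λ := inv_nonneg.2 (norm_nonneg _)
  set h : ℝ → ℝ := (Iic (-R)).indicator fun t => Λ * |q t|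
  have hhint : Integrable h :=
    (integrable_indicator_iff measurableSet_Iic).2 (hq.abs.const_mul Λ).integrableOn
  have hh0 : ∀ t, 0 ≤ h t := indicator_nonneg fun t _ => mul_nonneg hΛ (abs_nonneg _)
  have hhη : ∫ t, h t ≤ Λ * η := by
    rw [integral_indicator measurableSet_Iic, integral_const_mul]
    exact mul_le_mul_of_nonneg_left hlo hΛ
  have hQ := integral_nonneg (μ := volume) (f := fun t => |q t|) fun t => abs_nonneg (q t)
  calc ‖m x‖ ≤ 2 * (1 + Λ * (∫ t, |q t|) * (2 * Real.exp (4 * (2 * R * (∫ t, |q t|) + Λ * η))))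
        * Real.exp (4 * tailIntegral h x) :=
        le_two_mul_exp_tailIntegral hhint hh0 hm.norm (fun t => norm_nonneg _) hmC
          (by positivity) (fun y _ => norm_le_add_integral_indicator_of_jost hq him hm hmC hjost
            (fun t ht => norm_le_of_neg_le_of_jost hq him hm hmC hjost hR hhi ht.le) y) le_rfl
    _ ≤ _ := by
      gcongr
      exact (tailIntegral.le_integral hhint hh0 x).trans hhη

lemma norm_one_sub_inv_mul_integral_le_of_jost (hq : Integrable q) (him : 0 ≤ lam.im)
    (hm : Measurable m) {C : ℝ} (hmC : ∀ x, ‖m x‖ ≤ C)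
    (hjost : ∀ x, m x = 1 + ∫ t in Ioi x, D lam (t - x) * q t * m t)
    {R η : ℝ} (hR : 0 ≤ R) (hlo : ∫ t in Iic (-R), |q t| ≤ η) (hhi : ∫ t in Ioi R, |q t| ≤ η) :
    ‖1 - (2 * Complex.I * lam)⁻¹ * ∫ t, (q t : ℂ) * m t‖
      ≤ (1 + 2 * (‖lam‖⁻¹ * ∫ t, |q t|)) ^ 2 *
        Real.exp (8 * R * (∫ t, |q t|) + 8 * ‖lam‖⁻¹ * η) := by
  refine (norm_one_sub_inv_mul_integral_le hq
    (norm_le_of_tails_of_jost hq him hm hmC hjost hR hlo hhi)).trans ?_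
  set Λ := ‖lam‖⁻¹
  set Q := ∫ t, |q t|
  have hΛ : 0 ≤ Λ := inv_nonneg.2 (norm_nonneg _)
  have hQ : 0 ≤ Q := integral_nonneg fun t => abs_nonneg (q t)
  have hη : 0 ≤ η := (setIntegral_nonneg measurableSet_Ioi fun t _ => abs_nonneg (q t)).trans hhi
  have hsplit : Real.exp (4 * (2 * R * Q + Λ * η)) * Real.exp (4 * (Λ * η))
      = Real.exp (8 * R * Q + 8 * Λ * η) := by
    rw [← Real.exp_add]; ring_nf
  have hE : Real.exp (4 * (Λ * η)) ≤ Real.exp (8 * R * Q + 8 * Λ * η) :=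
    Real.exp_le_exp.2 (by nlinarith [mul_nonneg hR hQ, mul_nonneg hΛ hη])
  have hE1 : 1 ≤ Real.exp (8 * R * Q + 8 * Λ * η) := Real.one_le_exp (by positivity)
  have hX : 0 ≤ Λ * Q := mul_nonneg hΛ hQ
  calc 1 + Λ / 2 * (Q * (2 * (1 + Λ * Q * (2 * Real.exp (4 * (2 * R * Q + Λ * η)))) *
          Real.exp (4 * (Λ * η))))
      = 1 + Λ * Q * Real.exp (4 * (Λ * η)) +
          2 * (Λ * Q) ^ 2 * Real.exp (8 * R * Q + 8 * Λ * η) := by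
        rw [← hsplit]; ring
    _ ≤ _ := by nlinarith [mul_le_mul_of_nonneg_left hE hX]

end Jost

lemma max_log_le_two_mul_log_add {a b s : ℝ} (ha : 0 ≤ a) (hb : 1 ≤ b) (hs : 0 ≤ s)
    (hab : a ≤ b ^ 2 * Real.exp s) : max (Real.log a) 0 ≤ 2 * Real.log b + s := by
  have hlog : Real.log (b ^ 2 * Real.exp s) = 2 * Real.log b + s := by
    rw [Real.log_mul (by positivity) (Real.exp_pos s).ne', Real.log_pow, Real.log_exp]
    push_cast; ring
  have hrhs : 0 ≤ 2 * Real.log b + s := by linarith [Real.log_nonneg hb]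
  refine max_le ?_ hrhs
  rcases ha.eq_or_lt with rfl | ha
  · simpa using hrhs
  · exact hlog ▸ Real.log_le_log ha hab

lemma eventually_mul_sub_two_mul_mul_log_lt (c : ℝ) {ε : ℝ} (hε : 0 < ε) :
    ∀ᶠ L in 𝓝 (0 : ℝ), L * c - 2 * (L * Real.log L) < ε := by
  have hcont : Continuous fun L => L * c - 2 * (L * Real.log L) :=
    (continuous_id.mul continuous_const).sub (continuous_const.mul Real.continuous_mul_log)
  have hlim := hcont.tendsto 0
  rw [show (0 : ℝ) * c - 2 * (0 * Real.log 0) = 0 by simp] at hlim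
  exact hlim.eventually_lt_const hε

theorem log_plus_a_little_o (q : ℝ → ℝ) (hq : Integrable q)
    (m : ℂ → ℝ → ℂ)
    (hm : ∀ lam : ℂ, 0 ≤ lam.im → lam ≠ 0 →
      Measurable (m lam) ∧ (∃ C, ∀ x, ‖m lam x‖ ≤ C) ∧
      (∀ x, m lam x = 1 + ∫ t in Set.Ioi x, D lam (t - x) * (q t : ℂ) * m lam t)) :
    ∀ ε > (0 : ℝ), ∃ δ > (0 : ℝ), ∀ lam : ℂ, 0 < lam.im → ‖lam‖ < δ →
      ‖lam‖ *
        max (Real.log ‖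
          (1 - (2 * Complex.I * lam)⁻¹ * ∫ t : ℝ, (q t : ℂ) * m lam t)‖) 0 ≤ ε := by
  intro ε hε
  obtain ⟨R, hR, hlo, hhi⟩ := exists_setIntegral_Iic_Ioi_le hq.abs (by positivity : 0 < ε / 16)
  set Q := ∫ t, |q t|
  have hQ : 0 ≤ Q := integral_nonneg fun t => abs_nonneg (q t)
  set c := 2 * Real.log (1 + 2 * Q) + 8 * R * Q
  obtain ⟨δ, hδ, hball⟩ := Metric.eventually_nhds_iff.1 ((eventually_lt_nhds one_pos).and
    (eventually_mul_sub_two_mul_mul_log_lt c (by positivity : 0 < ε / 2)))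
  refine ⟨δ, hδ, fun lam him hlt => ?_⟩
  have hlam : lam ≠ 0 := by rintro rfl; simp at him
  have hL : 0 < ‖lam‖ := norm_pos_iff.2 hlam
  obtain ⟨hL1, hLε⟩ := hball (y := ‖lam‖) (by simpa using hlt)
  obtain ⟨hmeas, ⟨C, hC⟩, hjost⟩ := hm lam him.le hlam
  have ha := norm_one_sub_inv_mul_integral_le_of_jost hq him.le hmeas hC hjost hR.le hlo hhi
  have hΛ : 1 ≤ ‖lam‖⁻¹ := (one_le_inv₀ hL).2 hL1.le
  calc _ ≤ ‖lam‖ * (2 * Real.log (‖lam‖⁻¹ * (1 + 2 * Q)) +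
        (8 * R * Q + 8 * ‖lam‖⁻¹ * (ε / 16))) := by
        gcongr
        refine max_log_le_two_mul_log_add (norm_nonneg _) (by nlinarith) (by positivity)
          (ha.trans ?_)
        gcongr
        nlinarith
    _ = ‖lam‖ * c - 2 * (‖lam‖ * Real.log ‖lam‖) + ε / 2 := by
        rw [Real.log_mul (by positivity) (by positivity), Real.log_inv]
        field_simp
        ring
    _ ≤ ε := by linarith
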